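/- arXiv:math/0207088 — 2 statements merged into one kernel-verified Lean document; each statement's English description precedes it below -/
import Mathlib

section
/- Let K be a number field with ring of integers O_K, and fix a finite set 𝒥 of integral ideals of O_K containing exactly one representative of each ideal class. There exists a positive real constant c₁ depending only on K and 𝒥 such that for every (x₀,…,x_n) ∈ O_K^{n+1}, not all zero, whose coordinates generate an ideal belonging to 𝒥, one has (1/c₁) · ∏_σ max_i |σ(x_i)| ≤ H([x₀ : … : x_n]) ≤ c₁ · ∏_σ max_i |σ(x_i)|, where the product runs over all d = [K:ℚ] embeddings σ : K → ℂ. -/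
open NumberField Projectivization
open scoped LinearAlgebra.Projectivization nonZeroDivisors

/-- The multiplicative projective height of a nonzero vector `x` over a number field `K`
(not normalized to be independent of `K`): the product over all places of the sup of the
local norms of the coordinates.  It equals the product over all complex embeddings of the
sup of the absolute values of the coordinates, divided by the absolute norm of the
fractional ideal generated by the coordinates. -/
noncomputable def projHeight (K : Type*) [Field K] [NumberField K]
    {ι : Type*} [Fintype ι] (x : ι → K) : ℝ :=
  (∏ σ : K →+* ℂ, ⨆ i, ‖σ (x i)‖) /
    ((FractionalIdeal.absNorm (∑ i, FractionalIdeal.spanSingleton (𝓞 K)⁰ (x i)) : ℚ) : ℝ)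

/-- The height of a point of projective space over `K`. -/
noncomputable def projHeightP (K : Type*) [Field K] [NumberField K]
    {ι : Type*} [Fintype ι] (P : ℙ K (ι → K)) : ℝ :=
  projHeight K P.rep

/-- The Plücker coordinates of the line spanned by `a` and `b`, indexed by all pairs. -/
def plucker {K : Type*} [Field K] {n : ℕ} (a b : Fin (n + 1) → K) :
    Fin (n + 1) × Fin (n + 1) → K :=
  fun p => a p.1 * b p.2 - a p.2 * b p.1
/-- Two nonzero integral ideals of the ring of integers lie in the same ideal class
iff they agree up to multiplication by nonzero principal ideals. -/
def idealSameClass (K : Type*) [Field K] [NumberField K] (I J : Ideal (𝓞 K)) : Prop :=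
  ∃ a b : 𝓞 K, a ≠ 0 ∧ b ≠ 0 ∧ Ideal.span {a} * I = Ideal.span {b} * J
lemma prod_abs_embeddings {K : Type*} [Field K] [NumberField K] (a : K) :
    ∏ σ : K →+* ℂ, ‖σ a‖ = |(Algebra.norm ℚ a : ℚ)| := by
  have h := congr_arg (fun z : ℂ => ‖z‖) (Algebra.norm_eq_prod_embeddings ℚ ℂ a)
  simp only [norm_prod] at h
  have e : ∏ σ : K →+* ℂ, ‖σ a‖ = ∏ φ : K →ₐ[ℚ] ℂ, ‖φ a‖ :=
    Fintype.prod_equiv (RingHom.equivRatAlgHom K ℂ) _ _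
      (fun _ => by simp [RingHom.equivRatAlgHom_apply])
  rw [e, ← h, eq_ratCast, ← Complex.ofReal_ratCast, Complex.norm_real, Real.norm_eq_abs, Rat.cast_abs]

lemma projHeight_smul {K : Type*} [Field K] [NumberField K] {ι : Type*} [Fintype ι]
    (a : K) (ha : a ≠ 0) (x : ι → K) : projHeight K (a • x) = projHeight K x := by
  unfold projHeight
  have hnum : ∀ σ : K →+* ℂ, (⨆ i, ‖σ ((a • x) i)‖)
      = ‖σ a‖ * ⨆ i, ‖σ (x i)‖ := by
    intro σ
    rw [Real.mul_iSup_of_nonneg (by positivity)]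
    simp [mul_comm, map_mul]
  have hden : (∑ i, FractionalIdeal.spanSingleton (𝓞 K)⁰ ((a • x) i))
      = FractionalIdeal.spanSingleton (𝓞 K)⁰ a
        * ∑ i, FractionalIdeal.spanSingleton (𝓞 K)⁰ (x i) := by
    rw [Finset.mul_sum]
    refine Finset.sum_congr rfl fun i _ => ?_
    rw [FractionalIdeal.spanSingleton_mul_spanSingleton]
    rfl
  simp only [hnum, hden, Finset.prod_mul_distrib, map_mul,
    FractionalIdeal.absNorm_span_singleton, prod_abs_embeddings]
  push_cast
  rw [mul_div_mul_left]
  simpa [Algebra.norm_eq_zero_iff] using ha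

lemma sum_spanSingleton_eq {K : Type*} [Field K] [NumberField K] {ι : Type*} [Fintype ι]
    (x : ι → 𝓞 K) :
    (∑ i, FractionalIdeal.spanSingleton (𝓞 K)⁰ (algebraMap (𝓞 K) K (x i)))
      = ((Ideal.span (Set.range x) : Ideal (𝓞 K)) : FractionalIdeal (𝓞 K)⁰ K) := by
  have h1 : (Ideal.span (Set.range x) : Ideal (𝓞 K)) = ∑ i, Ideal.span {x i} := by
    rw [Ideal.sum_eq_sup, Ideal.span, Submodule.span_range_eq_iSup]
    simp [Finset.sup_univ_eq_iSup, Submodule.span_singleton_eq_range]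
  have h2 : ((∑ i, Ideal.span {x i} : Ideal (𝓞 K)) : FractionalIdeal (𝓞 K)⁰ K)
      = ∑ i, ((Ideal.span {x i} : Ideal (𝓞 K)) : FractionalIdeal (𝓞 K)⁰ K) :=
    map_sum (FractionalIdeal.coeIdealHom (𝓞 K)⁰ K).toAddMonoidHom _ _
  rw [h1, h2]
  exact Finset.sum_congr rfl fun i _ =>
    (FractionalIdeal.coeIdeal_span_singleton (x i)).symm

/-- Fix a finite set `𝒥` of nonzero integral ideals of `𝓞 K` containing exactly one
representative of each ideal class.  There is a constant `c₁ > 0`, depending only on `K`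
and `𝒥`, such that for every nonzero integral coordinate vector whose coordinates
generate an ideal in `𝒥`, the height of the corresponding projective point agrees, up
to the factor `c₁`, with the product over all embeddings `σ : K → ℂ` of the sup of the
absolute values of the coordinates. -/
theorem height_comparison_for_class_rep_coordinates (K : Type*) [Field K] [NumberField K]
    (𝒥 : Finset (Ideal (𝓞 K)))
    (h1 : ∀ I ∈ 𝒥, I ≠ ⊥)
    (h2 : ∀ I : Ideal (𝓞 K), I ≠ ⊥ → ∃! J, J ∈ 𝒥 ∧ idealSameClass K I J) :
    ∃ c₁ : ℝ, 0 < c₁ ∧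
      ∀ (n : ℕ) (x : Fin (n + 1) → 𝓞 K)
        (hx : (fun i => (algebraMap (𝓞 K) K (x i))) ≠ 0),
        Ideal.span (Set.range x) ∈ 𝒥 →
          (1 / c₁) * ∏ σ : K →+* ℂ, (⨆ i, ‖σ (algebraMap (𝓞 K) K (x i))‖) ≤
              projHeightP K (Projectivization.mk K _ hx) ∧
          projHeightP K (Projectivization.mk K _ hx) ≤
              c₁ * ∏ σ : K →+* ℂ, (⨆ i, ‖σ (algebraMap (𝓞 K) K (x i))‖) := by
  
  refine ⟨max ((𝒥.sup Ideal.absNorm : ℕ) : ℝ) 1, lt_of_lt_of_le one_pos (le_max_right _ _), ?_⟩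
  intro n x hx hI
  set c₁ : ℝ := max ((𝒥.sup Ideal.absNorm : ℕ) : ℝ) 1 with hc₁
  have hc1 : (1 : ℝ) ≤ c₁ := le_max_right _ _
  have hc0 : (0 : ℝ) < c₁ := lt_of_lt_of_le one_pos hc1
  set P : ℝ := ∏ σ : K →+* ℂ, (⨆ i, ‖σ (algebraMap (𝓞 K) K (x i))‖) with hP
  have hP0 : 0 ≤ P :=
    Finset.prod_nonneg fun σ _ => Real.iSup_nonneg fun i => norm_nonneg _
  set N : ℕ := Ideal.absNorm (Ideal.span (Set.range x)) with hNdef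
  have hN1 : 1 ≤ N := by
    rw [Nat.one_le_iff_ne_zero, hNdef, ne_eq, Ideal.absNorm_eq_zero_iff]
    exact h1 _ hI
  have hNn : N ≤ 𝒥.sup Ideal.absNorm := Finset.le_sup (f := fun J : Ideal (𝓞 K) => Ideal.absNorm J) hI
  have hNc : (N : ℝ) ≤ c₁ := by
    rw [hc₁]
    exact le_max_of_le_left (Nat.cast_le.mpr hNn)
  have hN0 : (0 : ℝ) < N := by exact_mod_cast lt_of_lt_of_le one_pos hN1
  obtain ⟨a, ha⟩ := (Projectivization.mk_eq_mk_iff K _ _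
    (Projectivization.rep_nonzero _) hx).mp (Projectivization.mk_rep _)
  have hH : projHeightP K (Projectivization.mk K _ hx)
      = P / (N : ℝ) := by
    rw [projHeightP, ← ha, Units.smul_def,
      projHeight_smul (a : K) a.ne_zero, projHeight, sum_spanSingleton_eq,
      FractionalIdeal.coeIdeal_absNorm]
    push_cast
    rfl
  rw [hH]
  constructor
  · rw [one_div, inv_mul_eq_div]
    gcongr
  · calc P / (N : ℝ) ≤ P := by
          rw [div_le_iff₀ hN0]
          exact le_mul_of_one_le_right hP0 (by exact_mod_cast hN1)
      _ ≤ c₁ * P := le_mul_of_one_le_left hP0 hc1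
end

section
/- Let K be a number field and n ≥ 1. There exists a constant c > 0 such that for every real B ≥ 1, the number of points P ∈ Pⁿ(K) with H(P) ≤ B is at most c · B^{n+1}. -/
open NumberField Projectivization
open scoped LinearAlgebra.Projectivization nonZeroDivisors

open NumberField.InfinitePlace NumberField.Units NumberField.Units.dirichletUnitTheorem
open FractionalIdeal Module Matrix

section Aux

variable (K : Type*) [Field K] [NumberField K]


lemma exists_coord_bound :
    ∃ C : ℝ, 0 < C ∧ ∀ (z : 𝓞 K) (T : ℝ),
      (∀ φ : K →+* ℂ, ‖φ (algebraMap (𝓞 K) K z)‖ ≤ T) →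
      ∀ i, |((RingOfIntegers.basis K).repr z i : ℝ)| ≤ C * T := by
  classical
  set ι := Free.ChooseBasisIndex ℤ (𝓞 K)
  set b : Basis ι ℚ K := integralBasis K with hb
  set G : Matrix ι ι ℚ := LinearMap.BilinForm.toMatrix b (Algebra.traceForm ℚ K) with hG
  have hdet : G.det ≠ 0 := det_traceForm_ne_zero b
  have hinv : G⁻¹ * G = 1 := nonsing_inv_mul G (isUnit_iff_ne_zero.mpr hdet)
  set c1 : ι → ℝ := fun j => ∑ σ : K →ₐ[ℚ] ℂ, ‖σ (b j)‖ with hc1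
  have hc1nn : ∀ j, 0 ≤ c1 j := fun j => Finset.sum_nonneg fun _ _ => norm_nonneg _
  set c2 : ι → ℝ := fun i => ∑ j, |((G⁻¹ i j : ℚ) : ℝ)| * c1 j with hc2
  have hc2nn : ∀ i, 0 ≤ c2 i := fun i => Finset.sum_nonneg fun j _ =>
    mul_nonneg (abs_nonneg _) (hc1nn j)
  refine ⟨1 + ∑ i, c2 i, by positivity, fun z T hT i => ?_⟩
  have hT0 : 0 ≤ T := le_trans (norm_nonneg _)
    (hT (Classical.arbitrary (K →+* ℂ)))
  -- the rational coordinates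
  set a : ι → ℚ := fun i => ((RingOfIntegers.basis K).repr z i : ℚ) with ha
  have hza : (algebraMap (𝓞 K) K z) = ∑ j, a j • b j := by
    rw [← Basis.sum_repr b (algebraMap (𝓞 K) K z)]
    refine Finset.sum_congr rfl fun j _ => ?_
    rw [ha, hb, integralBasis_repr_apply]
    simp [eq_intCast]
  -- the traces
  set t : ι → ℚ := fun j => Algebra.trace ℚ K ((algebraMap (𝓞 K) K z) * b j) with ht
  have htG : t = G.mulVec a := by
    funext j
    have e1 : (algebraMap (𝓞 K) K z) * b j = ∑ k, a k • (b k * b j) := by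
      rw [hza, Finset.sum_mul]
      exact Finset.sum_congr rfl fun k _ => smul_mul_assoc _ _ _
    rw [ht]
    show Algebra.trace ℚ K ((algebraMap (𝓞 K) K z) * b j) = _
    rw [e1, map_sum, mulVec, dotProduct]
    refine Finset.sum_congr rfl fun k _ => ?_
    rw [_root_.map_smul, hG, LinearMap.BilinForm.toMatrix_apply, Algebra.traceForm_apply, smul_eq_mul,
      mul_comm (b k) (b j), mul_comm]
  have haG : a = G⁻¹.mulVec t := by rw [htG, mulVec_mulVec, hinv, one_mulVec]
  -- bound on |t j|
  have htb : ∀ j, |((t j : ℚ) : ℝ)| ≤ c1 j * T := by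
    intro j
    have h1 : (algebraMap ℚ ℂ) (t j) = ∑ σ : K →ₐ[ℚ] ℂ, σ ((algebraMap (𝓞 K) K z) * b j) :=
      trace_eq_sum_embeddings ℂ
    have h2 : |((t j : ℚ) : ℝ)| = ‖(algebraMap ℚ ℂ) (t j)‖ := by
      rw [show (algebraMap ℚ ℂ) (t j) = (((t j : ℚ) : ℝ) : ℂ) by push_cast; rfl,
        Complex.norm_real, Real.norm_eq_abs]
    rw [h2, h1]
    refine le_trans (norm_sum_le _ _) ?_
    rw [hc1, Finset.sum_mul]
    refine Finset.sum_le_sum fun σ _ => ?_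
    have h3 : ‖σ (algebraMap (𝓞 K) K z)‖ ≤ T := hT σ.toRingHom
    calc ‖σ ((algebraMap (𝓞 K) K z) * b j)‖
        = ‖σ (algebraMap (𝓞 K) K z)‖ * ‖σ (b j)‖ := by
          rw [_root_.map_mul, norm_mul]
      _ ≤ T * ‖σ (b j)‖ :=
          mul_le_mul_of_nonneg_right h3 (norm_nonneg _)
      _ = ‖σ (b j)‖ * T := mul_comm _ _
  -- conclude
  have key : |((a i : ℚ) : ℝ)| ≤ c2 i * T := by
    have : ((a i : ℚ) : ℝ) = ∑ j, ((G⁻¹ i j : ℚ) : ℝ) * ((t j : ℚ) : ℝ) := by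
      rw [haG]; push_cast [mulVec, dotProduct]; ring_nf
    rw [this]
    refine le_trans (Finset.abs_sum_le_sum_abs _ _) ?_
    rw [hc2, Finset.sum_mul]
    refine Finset.sum_le_sum fun j _ => ?_
    rw [abs_mul, mul_assoc]
    exact mul_le_mul_of_nonneg_left (htb j) (abs_nonneg _)
  have : |((RingOfIntegers.basis K).repr z i : ℝ)| = |((a i : ℚ) : ℝ)| := by
    simp [ha, Int.cast_abs]
  rw [this]
  refine le_trans key ?_
  have h1 : c2 i ≤ 1 + ∑ i, c2 i := by
    have := Finset.single_le_sum (f := c2) (fun j _ => hc2nn j) (Finset.mem_univ i)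
    linarith
  exact mul_le_mul_of_nonneg_right h1 hT0


set_option maxSynthPendingDepth 2 in
lemma exists_unit_balance :
    ∃ C : ℝ, 1 ≤ C ∧ ∀ (M : InfinitePlace K → ℝ), (∀ w, 0 < M w) →
      ∃ u : (𝓞 K)ˣ, ∀ w : InfinitePlace K,
        w (algebraMap (𝓞 K) K u) * M w ≤
          C * (∏ w, M w ^ (mult w)) ^ ((finrank ℚ K : ℝ)⁻¹) := by
  classical
  have hd : 0 < (finrank ℚ K : ℝ) := by
    exact_mod_cast finrank_pos (R := ℚ) (M := K)
  set r := Units.rank K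
  set b' : Basis (Fin r) ℝ ({w : InfinitePlace K // w ≠ w₀} → ℝ) :=
    (basisUnitLattice K).ofZLatticeBasis ℝ _ with hb'
  set C₁ : ℝ := ∑ i, ‖b' i‖ with hC₁
  have hC₁nn : 0 ≤ C₁ := Finset.sum_nonneg fun _ _ => norm_nonneg _
  set A : ℝ := (Fintype.card (InfinitePlace K)) * C₁ with hA
  have hAnn : 0 ≤ A := mul_nonneg (Nat.cast_nonneg _) hC₁nn
  refine ⟨Real.exp A, Real.one_le_exp hAnn, fun M hM => ?_⟩
  set d : ℝ := (finrank ℚ K : ℝ)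
  set L : InfinitePlace K → ℝ := fun w => Real.log (M w) with hL
  set S : ℝ := ∑ w, (mult w : ℝ) * L w with hS
  -- the target vector
  set v : ({w : InfinitePlace K // w ≠ w₀} → ℝ) :=
    fun w => (mult w.1 : ℝ) * (S / d - L w.1) with hv
  set m : Fin r → ℤ := fun i => round (b'.repr v i) with hm
  set g : Additive (𝓞 K)ˣ := ∑ i, m i • Additive.ofMul (fundSystem K i) with hg
  set u : (𝓞 K)ˣ := g.toMul with hu
  have hlog : logEmbedding K g = ∑ i, (m i : ℝ) • b' i := by
    rw [hg, map_sum]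
    refine Finset.sum_congr rfl fun i _ => ?_
    rw [map_zsmul, logEmbedding_fundSystem]
    rw [hb', Basis.ofZLatticeBasis_apply, Int.cast_smul_eq_zsmul ℝ]
  -- coordinatewise approximation
  have happrox : ∀ w : {w : InfinitePlace K // w ≠ w₀},
      |logEmbedding K g w - v w| ≤ C₁ := by
    intro w
    have hv' : v = ∑ i, (b'.repr v i) • b' i := (Basis.sum_repr b' v).symm
    have : logEmbedding K g w - v w = ∑ i, ((m i : ℝ) - b'.repr v i) * (b' i w) := by
      rw [hlog]
      conv_lhs => rw [hv']
      simp only [Finset.sum_apply, Pi.smul_apply, smul_eq_mul, ← Finset.sum_sub_distrib]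
      exact Finset.sum_congr rfl fun i _ => by ring
    rw [this]
    refine le_trans (Finset.abs_sum_le_sum_abs _ _) ?_
    rw [hC₁]
    refine Finset.sum_le_sum fun i _ => ?_
    rw [abs_mul]
    have h1 : |(m i : ℝ) - b'.repr v i| ≤ 1 := by
      rw [hm, abs_sub_comm]
      exact le_trans (abs_sub_round _) (by norm_num)
    have h2 : |b' i w| ≤ ‖b' i‖ := by
      rw [← Real.norm_eq_abs]
      exact norm_le_pi_norm (b' i) w
    calc |(m i : ℝ) - b'.repr v i| * |b' i w| ≤ 1 * ‖b' i‖ :=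
          mul_le_mul h1 h2 (abs_nonneg _) zero_le_one
      _ = ‖b' i‖ := one_mul _
  -- sum of mult * log (w u) vanishes
  have hsum0 : ∑ w : InfinitePlace K, (mult w : ℝ) * Real.log (w (algebraMap (𝓞 K) K u)) = 0 := by
    have h := congr_arg Real.log (prod_eq_abs_norm (algebraMap (𝓞 K) K u))
    rw [Units.norm, Rat.cast_one, Real.log_one, Real.log_prod] at h
    · simp_rw [Real.log_pow] at h
      exact h
    · exact fun w _ => pow_ne_zero _ (AbsoluteValue.ne_zero _ (coe_ne_zero u))
  -- the key quantity
  set F : InfinitePlace K → ℝ :=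
    fun w => (mult w : ℝ) * Real.log (w (algebraMap (𝓞 K) K u) * M w) with hF
  have hwu : ∀ w : InfinitePlace K, 0 < w (algebraMap (𝓞 K) K u) :=
    fun w => pos_iff.mpr (coe_ne_zero u)
  have hFsplit : ∀ w, F w = (mult w : ℝ) * Real.log (w (algebraMap (𝓞 K) K u))
      + (mult w : ℝ) * L w := by
    intro w
    simp only [hF]
    rw [Real.log_mul (ne_of_gt (hwu w)) (ne_of_gt (hM w)), mul_add]
  have hdm : ∑ w : InfinitePlace K, ((mult w : ℝ)) = d := by
    rw [show d = ((finrank ℚ K : ℕ) : ℝ) from rfl, ← sum_mult_eq (K := K)]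
    push_cast
    rfl
  have hFsum : ∑ w : InfinitePlace K, (F w - (mult w : ℝ) * (S / d)) = 0 := by
    simp_rw [hFsplit]
    rw [Finset.sum_sub_distrib, Finset.sum_add_distrib, hsum0, zero_add, ← Finset.sum_mul, hdm]
    rw [hS]
    field_simp
    ring
  -- F w - mult w * S/d is small for w ≠ w₀
  have hkey : ∀ w : {w : InfinitePlace K // w ≠ w₀}, |F w.1 - (mult w.1 : ℝ) * (S / d)| ≤ C₁ := by
    intro w
    have h1 : logEmbedding K g w = (mult w.1 : ℝ) * Real.log (w.1 (algebraMap (𝓞 K) K u)) := by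
      have : g = Additive.ofMul u := rfl
      rw [this, logEmbedding_component]
    have h2 : F w.1 - (mult w.1 : ℝ) * (S / d) = logEmbedding K g w - v w := by
      rw [hFsplit, h1, hv]
      ring
    rw [h2]
    exact happrox w
  -- deduce the bound for all w
  have hkey' : ∀ w ∈ Finset.univ.erase (w₀ : InfinitePlace K),
      |F w - (mult w : ℝ) * (S / d)| ≤ C₁ :=
    fun w hw => hkey ⟨w, Finset.ne_of_mem_erase hw⟩
  have hmain : ∀ w : InfinitePlace K, F w ≤ (mult w : ℝ) * (S / d) + A := by
    have hsplit : ∑ w : InfinitePlace K, (F w - (mult w : ℝ) * (S / d)) =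
        (F w₀ - (mult (w₀ : InfinitePlace K) : ℝ) * (S / d)) +
        ∑ w ∈ Finset.univ.erase (w₀ : InfinitePlace K), (F w - (mult w : ℝ) * (S / d)) := by
      rw [← Finset.insert_erase (Finset.mem_univ (w₀ : InfinitePlace K)),
        Finset.sum_insert (Finset.notMem_erase _ _)]
      rw [Finset.insert_erase (Finset.mem_univ (w₀ : InfinitePlace K))]
    intro w
    by_cases hw : w = w₀
    · rw [← hw] at hsplit hkey'
      have h3 : F w - (mult w : ℝ) * (S / d) =
          - ∑ w' ∈ Finset.univ.erase w,
            (F w' - (mult w' : ℝ) * (S / d)) := by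
        have := hFsum
        rw [hsplit] at this
        linarith
      have h4 : - ∑ w' ∈ Finset.univ.erase w,
          (F w' - (mult w' : ℝ) * (S / d)) ≤
          ∑ w' ∈ Finset.univ.erase w, C₁ := by
        rw [← Finset.sum_neg_distrib]
        exact Finset.sum_le_sum fun w' hw' => le_trans (neg_le_abs _) (hkey' w' hw')
      have h5 : ∑ w' ∈ Finset.univ.erase w, C₁ ≤ A := by
        rw [Finset.sum_const, hA, nsmul_eq_mul]
        refine mul_le_mul_of_nonneg_right ?_ hC₁nn
        refine le_trans ?_ (le_refl _)
        exact_mod_cast Finset.card_le_univ _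
      linarith [h3, h4, h5]
    · have := hkey ⟨w, hw⟩
      have h6 : (C₁ : ℝ) ≤ A := by
        rw [hA]
        nth_rw 1 [← one_mul C₁]
        refine mul_le_mul_of_nonneg_right ?_ hC₁nn
        exact_mod_cast Fintype.card_pos (α := InfinitePlace K)
      have := abs_le.mp this
      linarith [this.2]
  -- convert to the multiplicative statement
  refine ⟨u, fun w => ?_⟩
  have hmult1 : (1 : ℝ) ≤ (mult w : ℝ) := one_le_mult
  have h7 : Real.log (w (algebraMap (𝓞 K) K u) * M w) ≤ S / d + A := by
    have := hmain w
    rw [hF] at this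
    nlinarith [this, hmult1, hAnn]
  have h8 : (0 : ℝ) < w (algebraMap (𝓞 K) K u) * M w := mul_pos (hwu w) (hM w)
  have h9 : ∏ w : InfinitePlace K, M w ^ (mult w) = Real.exp S := by
    rw [← Real.exp_log (Finset.prod_pos fun w _ => pow_pos (hM w) _), Real.log_prod
      (fun w _ => ne_of_gt (pow_pos (hM w) _))]
    simp_rw [Real.log_pow]
    rfl
  rw [h9, ← Real.exp_mul]
  calc w (algebraMap (𝓞 K) K u) * M w = Real.exp (Real.log (w (algebraMap (𝓞 K) K u) * M w)) :=
        (Real.exp_log h8).symm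
    _ ≤ Real.exp (S / d + A) := Real.exp_le_exp.mpr h7
    _ = Real.exp A * Real.exp (S * d⁻¹) := by rw [div_eq_mul_inv, add_comm, Real.exp_add]


lemma exists_class_rep :
    ∃ C : ℝ, 1 ≤ C ∧ ∀ I : FractionalIdeal (𝓞 K)⁰ K, I ≠ 0 →
      ∃ (μ : K) (J : Ideal (𝓞 K)), μ ≠ 0 ∧
        (J : FractionalIdeal (𝓞 K)⁰ K) = spanSingleton (𝓞 K)⁰ μ * I ∧
        0 < (Ideal.absNorm J : ℝ) ∧ (Ideal.absNorm J : ℝ) ≤ C := by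
  classical
  have hrep : ∀ c : ClassGroup (𝓞 K), ∃ J : (Ideal (𝓞 K))⁰, ClassGroup.mk0 J = c :=
    fun c => ClassGroup.mk0_surjective c
  choose rep hrep' using hrep
  set C : ℝ := 1 + ∑ c : ClassGroup (𝓞 K), (Ideal.absNorm ((rep c : Ideal (𝓞 K))) : ℝ) with hC
  have hCnn : 1 ≤ C := by
    rw [hC]
    have : (0:ℝ) ≤ ∑ c : ClassGroup (𝓞 K), (Ideal.absNorm ((rep c : Ideal (𝓞 K))) : ℝ) :=
      Finset.sum_nonneg fun _ _ => Nat.cast_nonneg _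
    linarith
  refine ⟨C, hCnn, fun I hI => ?_⟩
  have hnum : I.num ≠ 0 := fun h => hI (FractionalIdeal.num_eq_zero_iff.mp h)
  have hnum' : I.num ∈ (Ideal (𝓞 K))⁰ := mem_nonZeroDivisors_iff_ne_zero.mpr hnum
  set c := ClassGroup.mk0 (⟨I.num, hnum'⟩ : (Ideal (𝓞 K))⁰) with hc
  have := hrep' c
  rw [hc, ClassGroup.mk0_eq_mk0_iff] at this
  obtain ⟨x, y, hx, hy, hxy⟩ := this
  -- fractionalize
  have hfrac : spanSingleton (𝓞 K)⁰ (algebraMap (𝓞 K) K x) * ((rep c : Ideal (𝓞 K)) :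
      FractionalIdeal (𝓞 K)⁰ K) =
      spanSingleton (𝓞 K)⁰ (algebraMap (𝓞 K) K y) * (I.num : FractionalIdeal (𝓞 K)⁰ K) := by
    rw [← coeIdeal_span_singleton, ← coeIdeal_span_singleton, ← coeIdeal_mul, ← coeIdeal_mul, hxy]
  have hden : spanSingleton (𝓞 K)⁰ (algebraMap (𝓞 K) K I.den) * I =
      (I.num : FractionalIdeal (𝓞 K)⁰ K) := FractionalIdeal.den_mul_self_eq_num' (S := (𝓞 K)⁰) (P := K) I
  have hxK : algebraMap (𝓞 K) K x ≠ 0 := RingOfIntegers.coe_ne_zero_iff.mpr hx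
  have hyK : algebraMap (𝓞 K) K y ≠ 0 := RingOfIntegers.coe_ne_zero_iff.mpr hy
  have hdK : algebraMap (𝓞 K) K (I.den : 𝓞 K) ≠ 0 :=
    RingOfIntegers.coe_ne_zero_iff.mpr (mem_nonZeroDivisors_iff_ne_zero.mp I.den.2)
  set μ : K := (algebraMap (𝓞 K) K x)⁻¹ * algebraMap (𝓞 K) K y *
    algebraMap (𝓞 K) K (I.den : 𝓞 K) with hμ
  have hμ0 : μ ≠ 0 := by
    rw [hμ]
    exact mul_ne_zero (mul_ne_zero (inv_ne_zero hxK) hyK) hdK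
  refine ⟨μ, (rep c : Ideal (𝓞 K)), hμ0, ?_, ?_, ?_⟩
  · rw [hμ]
    rw [← spanSingleton_mul_spanSingleton, ← spanSingleton_mul_spanSingleton]
    rw [mul_assoc, mul_assoc, hden, ← hfrac, ← mul_assoc, spanSingleton_mul_spanSingleton,
      inv_mul_cancel₀ hxK, spanSingleton_one, one_mul]
  · have h0 : (rep c : Ideal (𝓞 K)) ≠ ⊥ :=
      mem_nonZeroDivisors_iff_ne_zero.mp (rep c).2
    have : Ideal.absNorm (rep c : Ideal (𝓞 K)) ≠ 0 := by
      rw [Ideal.absNorm_ne_zero_iff]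
      exact Ideal.finiteQuotientOfFreeOfNeBot _ h0
    positivity
  · rw [hC]
    have := Finset.single_le_sum
      (f := fun c : ClassGroup (𝓞 K) => (Ideal.absNorm ((rep c : Ideal (𝓞 K))) : ℝ))
      (fun c _ => Nat.cast_nonneg _) (Finset.mem_univ c)
    linarith

lemma prod_mk_eq (f : InfinitePlace K → ℝ) :
    ∏ φ : K →+* ℂ, f (InfinitePlace.mk φ) = ∏ w, f w ^ (mult w) := by
  classical
  rw [← Finset.prod_fiberwise' Finset.univ (fun φ => InfinitePlace.mk φ) f]
  exact Finset.prod_congr rfl fun w _ => by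
    rw [Finset.prod_const, card_filter_mk_eq]

lemma exists_good_rep :
    ∃ C : ℝ, 1 ≤ C ∧ ∀ {n : ℕ} (P : ℙ K (Fin (n+1) → K)) (B : ℝ), 1 ≤ B →
      projHeightP K P ≤ B →
      ∃ (y : Fin (n+1) → 𝓞 K) (c : K), c ≠ 0 ∧
        (fun i => algebraMap (𝓞 K) K (y i)) = c • P.rep ∧
        ∀ (φ : K →+* ℂ) (i : Fin (n+1)), ‖φ (algebraMap (𝓞 K) K (y i))‖ ≤
          C * B ^ ((finrank ℚ K : ℝ)⁻¹) := by
  classical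
  obtain ⟨C₁, hC₁, hbal⟩ := exists_unit_balance K
  obtain ⟨C₀, hC₀, hcls⟩ := exists_class_rep K
  have hd : 0 < (finrank ℚ K : ℝ) := by exact_mod_cast finrank_pos (R := ℚ) (M := K)
  have hdinv : 0 ≤ (finrank ℚ K : ℝ)⁻¹ := by positivity
  have hdinv1 : (finrank ℚ K : ℝ)⁻¹ ≤ 1 := by
    rw [inv_le_one_iff₀]
    right
    exact_mod_cast finrank_pos (R := ℚ) (M := K)
  refine ⟨C₁ * C₀, one_le_mul_of_one_le_of_one_le hC₁ hC₀, fun {n} P B hB hP => ?_⟩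
  set x : Fin (n+1) → K := P.rep with hx
  have hx0 : x ≠ 0 := P.rep_nonzero
  obtain ⟨j, hj⟩ := Function.ne_iff.mp hx0
  have hj : x j ≠ 0 := hj
  set I : FractionalIdeal (𝓞 K)⁰ K := ∑ i, spanSingleton (𝓞 K)⁰ (x i) with hI
  have hle : ∀ (s : Finset (Fin (n+1))) (i : Fin (n+1)), i ∈ s →
      spanSingleton (𝓞 K)⁰ (x i) ≤ ∑ k ∈ s, spanSingleton (𝓞 K)⁰ (x k) := by
    intro s
    induction s using Finset.induction with
    | empty => intro i h; simp at h
    | @insert a s hns ih =>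
      intro i hmem
      rw [Finset.sum_insert hns, ← sup_eq_add]
      rcases Finset.mem_insert.mp hmem with h | h
      · rw [h]; exact le_sup_left
      · exact le_trans (ih i h) le_sup_right
  have hmemI : ∀ i, x i ∈ I := by
    intro i
    exact SetLike.le_def.mp (hle Finset.univ i (Finset.mem_univ i)) (mem_spanSingleton_self _ _)
  have hI0 : I ≠ 0 := by
    intro h
    apply hj
    have := hmemI j
    rw [h] at this
    simpa using this
  obtain ⟨μ, J, hμ0, hJ, hJpos, hJle⟩ := hcls I hI0
  -- the integral coordinates
  have hzmem : ∀ i, μ * x i ∈ (J : FractionalIdeal (𝓞 K)⁰ K) := by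
    intro i
    rw [hJ]
    exact mul_mem_mul (mem_spanSingleton_self _ _) (hmemI i)
  have hz' : ∀ i, ∃ z : 𝓞 K, z ∈ J ∧ algebraMap (𝓞 K) K z = μ * x i := by
    intro i
    obtain ⟨z, hz1, hz2⟩ := (mem_coeIdeal _).mp (hzmem i)
    exact ⟨z, hz1, hz2⟩
  choose z hzJ hzval using hz'
  -- place-wise maxima
  set M : InfinitePlace K → ℝ := fun w => ⨆ i, w (μ * x i) with hM
  have hbdd : ∀ (w : InfinitePlace K), BddAbove (Set.range fun i => w (μ * x i)) :=
    fun w => Set.Finite.bddAbove (Set.finite_range _)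
  have hMpos : ∀ w, 0 < M w := by
    intro w
    have h1 : w (μ * x j) ≤ M w := le_ciSup (hbdd w) j
    have h2 : 0 < w (μ * x j) := pos_iff.mpr (mul_ne_zero hμ0 hj)
    linarith
  -- numerator of the scaled vector
  have hsup : ∀ φ : K →+* ℂ, (⨆ i, ‖φ (μ * x i)‖) = M (InfinitePlace.mk φ) := by
    intro φ
    rw [hM]
    exact iSup_congr fun i => (InfinitePlace.apply φ _).symm
  have hnumprod : ∏ φ : K →+* ℂ, (⨆ i, ‖φ (μ * x i)‖) = ∏ w, M w ^ (mult w) := by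
    rw [← prod_mk_eq K M]
    exact Finset.prod_congr rfl fun φ _ => hsup φ
  -- relate to the height
  have habs : ∀ φ : K →+* ℂ, ∀ i, ‖φ (μ * x i)‖ = ‖φ μ‖ *
      ‖φ (x i)‖ := fun φ i => by rw [_root_.map_mul φ, norm_mul]
  have hsup2 : ∀ φ : K →+* ℂ, (⨆ i, ‖φ (μ * x i)‖) =
      ‖φ μ‖ * ⨆ i, ‖φ (x i)‖ := by
    intro φ
    rw [Real.mul_iSup_of_nonneg (norm_nonneg _)]
    exact iSup_congr fun i => habs φ i
  -- numerator of x and positivity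
  set Nx : ℝ := ∏ φ : K →+* ℂ, ⨆ i, ‖φ (x i)‖ with hNx
  have hNxpos : 0 < Nx := by
    refine Finset.prod_pos fun φ _ => ?_
    have h1 : ‖φ (x j)‖ ≤ ⨆ i, ‖φ (x i)‖ :=
      le_ciSup (f := fun i => ‖φ (x i)‖)
        (Set.Finite.bddAbove (Set.finite_range _)) j
    have h2 : 0 < ‖φ (x j)‖ := by
      rw [norm_pos_iff]
      exact fun h => hj (by rwa [map_eq_zero] at h)
    linarith
  have habsI0 : absNorm I ≠ 0 := fun h => hI0 (absNorm_eq_zero_iff.mp h)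
  have habsIpos : 0 < ((absNorm I : ℚ) : ℝ) := by
    have := absNorm_nonneg I
    have h2 : (0:ℚ) < absNorm I := lt_of_le_of_ne this (Ne.symm habsI0)
    exact_mod_cast h2
  have hH : projHeightP K P = Nx / ((absNorm I : ℚ) : ℝ) := rfl
  -- norm of μ
  have hNμ : ∏ φ : K →+* ℂ, ‖φ μ‖ = ((|Algebra.norm ℚ μ| : ℚ) : ℝ) := by
    have h1 : ∏ φ : K →+* ℂ, ‖φ μ‖ =
        ∏ φ : K →+* ℂ, (fun w : InfinitePlace K => w μ) (InfinitePlace.mk φ) :=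
      Finset.prod_congr rfl fun φ _ => (InfinitePlace.apply φ μ).symm
    rw [h1, prod_mk_eq K (fun w : InfinitePlace K => w μ), prod_eq_abs_norm μ]
  -- norm of J
  have e1 : ((Ideal.absNorm J : ℚ) : ℝ) = ((|Algebra.norm ℚ μ| : ℚ) : ℝ) *
      ((absNorm I : ℚ) : ℝ) := by
    have : (Ideal.absNorm J : ℚ) = |Algebra.norm ℚ μ| * absNorm I := by
      rw [show ((Ideal.absNorm J : ℚ)) = absNorm (J : FractionalIdeal (𝓞 K)⁰ K) from
        (coeIdeal_absNorm (K := K) J).symm, hJ, _root_.map_mul absNorm, absNorm_span_singleton]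
    exact_mod_cast congrArg (fun q : ℚ => (q : ℝ)) this
  -- the product of the maxima is controlled
  have e2 : ∏ w, M w ^ (mult w) = ((|Algebra.norm ℚ μ| : ℚ) : ℝ) * Nx := by
    rw [← hnumprod]
    calc ∏ φ : K →+* ℂ, (⨆ i, ‖φ (μ * x i)‖)
        = ∏ φ : K →+* ℂ, (‖φ μ‖ * ⨆ i, ‖φ (x i)‖) :=
          Finset.prod_congr rfl fun φ _ => hsup2 φ
      _ = (∏ φ : K →+* ℂ, ‖φ μ‖) * Nx := by rw [Finset.prod_mul_distrib, hNx]
      _ = ((|Algebra.norm ℚ μ| : ℚ) : ℝ) * Nx := by rw [hNμ]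
  have e3 : ∏ w, M w ^ (mult w) ≤ C₀ * B := by
    rw [e2]
    have h4 : ((|Algebra.norm ℚ μ| : ℚ) : ℝ) = ((Ideal.absNorm J : ℚ) : ℝ) /
        ((absNorm I : ℚ) : ℝ) := by
      rw [e1]
      field_simp
    rw [h4, div_mul_eq_mul_div, mul_div_assoc, ← hH]
    have h5 : (0:ℝ) ≤ projHeightP K P := by
      rw [hH]
      positivity
    refine mul_le_mul ?_ hP h5 (le_trans zero_le_one hC₀)
    exact_mod_cast hJle
  -- balance by a unit
  obtain ⟨u, hu⟩ := hbal M hMpos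
  have hprodpos : 0 < ∏ w, M w ^ (mult w) :=
    Finset.prod_pos fun w _ => pow_pos (hMpos w) _
  have hfinal : ∀ w : InfinitePlace K, w (algebraMap (𝓞 K) K u) * M w ≤
      C₁ * C₀ * B ^ ((finrank ℚ K : ℝ)⁻¹) := by
    intro w
    refine le_trans (hu w) ?_
    have h6 : (∏ w, M w ^ (mult w)) ^ ((finrank ℚ K : ℝ)⁻¹) ≤
        (C₀ * B) ^ ((finrank ℚ K : ℝ)⁻¹) :=
      Real.rpow_le_rpow (le_of_lt hprodpos) e3 hdinv
    have h7 : (C₀ * B) ^ ((finrank ℚ K : ℝ)⁻¹) =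
        C₀ ^ ((finrank ℚ K : ℝ)⁻¹) * B ^ ((finrank ℚ K : ℝ)⁻¹) :=
      Real.mul_rpow (le_trans zero_le_one hC₀) (le_trans zero_le_one hB)
    have h8 : C₀ ^ ((finrank ℚ K : ℝ)⁻¹) ≤ C₀ := by
      have := Real.rpow_le_rpow_of_exponent_le hC₀ hdinv1
      rwa [Real.rpow_one] at this
    have h9 : (0:ℝ) ≤ B ^ ((finrank ℚ K : ℝ)⁻¹) :=
      Real.rpow_nonneg (le_trans zero_le_one hB) _
    calc C₁ * (∏ w, M w ^ (mult w)) ^ ((finrank ℚ K : ℝ)⁻¹)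
        ≤ C₁ * (C₀ * B) ^ ((finrank ℚ K : ℝ)⁻¹) :=
          mul_le_mul_of_nonneg_left h6 (le_trans zero_le_one hC₁)
      _ = C₁ * (C₀ ^ ((finrank ℚ K : ℝ)⁻¹) * B ^ ((finrank ℚ K : ℝ)⁻¹)) := by rw [h7]
      _ ≤ C₁ * (C₀ * B ^ ((finrank ℚ K : ℝ)⁻¹)) := by
          refine mul_le_mul_of_nonneg_left ?_ (le_trans zero_le_one hC₁)
          exact mul_le_mul_of_nonneg_right h8 h9
      _ = C₁ * C₀ * B ^ ((finrank ℚ K : ℝ)⁻¹) := by ring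
  -- assemble
  refine ⟨fun i => (u : 𝓞 K) * z i, algebraMap (𝓞 K) K (u : 𝓞 K) * μ,
    mul_ne_zero (NumberField.Units.coe_ne_zero u) hμ0, ?_, ?_⟩
  · funext i
    simp only [Pi.smul_apply, smul_eq_mul]
    rw [_root_.map_mul, hzval i]
    ring
  · intro φ i
    have h10 : ‖φ (algebraMap (𝓞 K) K ((u : 𝓞 K) * z i))‖ =
        (InfinitePlace.mk φ) (algebraMap (𝓞 K) K (u : 𝓞 K)) *
        ‖φ (μ * x i)‖ := by
      rw [_root_.map_mul (algebraMap (𝓞 K) K), _root_.map_mul φ,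
        norm_mul, hzval i, InfinitePlace.apply]
    rw [h10]
    have h11 : ‖φ (μ * x i)‖ ≤ M (InfinitePlace.mk φ) := by
      rw [← hsup φ]
      exact le_ciSup (f := fun i => ‖φ (μ * x i)‖)
        (Set.Finite.bddAbove (Set.finite_range _)) i
    refine le_trans ?_ (hfinal (InfinitePlace.mk φ))
    exact mul_le_mul_of_nonneg_left h11 (apply_nonneg _ _)

end Aux

/-- For a number field `K` and `n ≥ 1`, the number of points of `ℙⁿ(K)` of height at
most `B` is at most `c · B^{n+1}` for some constant `c > 0`. -/
theorem projective_space_counting_upper_bound (K : Type*) [Field K] [NumberField K]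
    (n : ℕ) (hn : 1 ≤ n) :
    ∃ c : ℝ, 0 < c ∧ ∀ B : ℝ, 1 ≤ B →
      {P : ℙ K (Fin (n + 1) → K) | projHeightP K P ≤ B}.Finite ∧
      (({P : ℙ K (Fin (n + 1) → K) | projHeightP K P ≤ B}.ncard : ℝ) ≤ c * B ^ (n + 1)) := by
  classical
  obtain ⟨CD, hCD, hrep⟩ := exists_good_rep K
  obtain ⟨CA, hCA, hcoord⟩ := exists_coord_bound K
  set d : ℕ := finrank ℚ K with hdd
  have hd0 : 0 < d := finrank_pos
  have hdR : (0:ℝ) < d := by exact_mod_cast hd0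
  set ιd := Free.ChooseBasisIndex ℤ (𝓞 K)
  have hcard : Fintype.card ιd = d := by
    rw [← finrank_eq_card_chooseBasisIndex, RingOfIntegers.rank]
  refine ⟨(((2*CA+1)*CD)^d)^(n+1), by positivity, fun B hB => ?_⟩
  have hB0 : (0:ℝ) ≤ B := le_trans zero_le_one hB
  set T : ℝ := CD * B ^ ((d:ℝ)⁻¹) with hT
  have hBr1 : (1:ℝ) ≤ B ^ ((d:ℝ)⁻¹) := by
    have := Real.rpow_le_rpow (zero_le_one) hB (by positivity : (0:ℝ) ≤ (d:ℝ)⁻¹)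
    rwa [Real.one_rpow] at this
  have hT1 : (1:ℝ) ≤ T := one_le_mul_of_one_le_of_one_le hCD hBr1
  have hT0 : (0:ℝ) ≤ T := le_trans zero_le_one hT1
  set N : ℤ := ⌊CA * T⌋ with hNdef
  have hN0 : (0:ℤ) ≤ N := Int.floor_nonneg.mpr (by positivity)
  set m : ℕ := (2*N+1).toNat with hmdef
  have hm0 : 0 < m := by
    rw [hmdef]
    omega
  set S := {P : ℙ K (Fin (n + 1) → K) | projHeightP K P ≤ B} with hS
  -- choose representatives
  have hex : ∀ P : ↥S, ∃ (y : Fin (n+1) → 𝓞 K) (c : K), c ≠ 0 ∧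
      (fun i => algebraMap (𝓞 K) K (y i)) = c • (P.1).rep ∧
      ∀ (φ : K →+* ℂ) (i : Fin (n+1)), ‖φ (algebraMap (𝓞 K) K (y i))‖ ≤
        CD * B ^ ((finrank ℚ K : ℝ)⁻¹) :=
    fun P => hrep P.1 B hB P.2
  choose y c hc0 hcy hybound using hex
  -- integer coordinate bounds
  have hint : ∀ (P : ↥S) (i : Fin (n+1)) (k : ιd),
      |(RingOfIntegers.basis K).repr (y P i) k| ≤ N := by
    intro P i k
    have h1 := hcoord (y P i) T (fun φ => by
      have := hybound P φ i
      rwa [hT]) k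
    rw [hNdef]
    refine Int.le_floor.mpr ?_
    calc ((|(RingOfIntegers.basis K).repr (y P i) k| : ℤ) : ℝ)
        = |((RingOfIntegers.basis K).repr (y P i) k : ℝ)| := by push_cast; rfl
      _ ≤ CA * T := h1
  -- the encoding map
  set enc : ℤ → Fin m := fun a => ⟨(a + N).toNat % m, Nat.mod_lt _ hm0⟩ with henc
  have hencinj : ∀ a b : ℤ, |a| ≤ N → |b| ≤ N → enc a = enc b → a = b := by
    intro a b ha hb hab
    have ha1 : 0 ≤ a + N := by rw [abs_le] at ha; omega
    have ha2 : (a + N).toNat < m := by rw [abs_le] at ha; omega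
    have hb1 : 0 ≤ b + N := by rw [abs_le] at hb; omega
    have hb2 : (b + N).toNat < m := by rw [abs_le] at hb; omega
    have := congrArg (fun x : Fin m => (x : ℕ)) hab
    simp only [henc, Nat.mod_eq_of_lt ha2, Nat.mod_eq_of_lt hb2] at this
    omega
  set F : ↥S → (Fin (n+1) → ιd → Fin m) :=
    fun P i k => enc ((RingOfIntegers.basis K).repr (y P i) k) with hF
  have hFinj : Function.Injective F := by
    intro P Q hPQ
    have hyeq : y P = y Q := by
      funext i
      apply (RingOfIntegers.basis K).repr.injective
      ext k
      exact hencinj _ _ (hint P i k) (hint Q i k) (congrFun (congrFun hPQ i) k)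
    -- deduce equality of the projective points
    have hv : c P • (P.1).rep = c Q • (Q.1).rep := by
      rw [← hcy P, ← hcy Q, hyeq]
    have hvne : c P • (P.1).rep ≠ 0 :=
      smul_ne_zero (hc0 P) (Projectivization.rep_nonzero _)
    have hwne : c Q • (Q.1).rep ≠ 0 :=
      smul_ne_zero (hc0 Q) (Projectivization.rep_nonzero _)
    have h1 : Projectivization.mk K (c P • (P.1).rep) hvne = P.1 := by
      conv_rhs => rw [← Projectivization.mk_rep P.1]
      rw [Projectivization.mk_eq_mk_iff]
      exact ⟨Units.mk0 (c P) (hc0 P), rfl⟩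
    have h2 : Projectivization.mk K (c Q • (Q.1).rep) hwne = Q.1 := by
      conv_rhs => rw [← Projectivization.mk_rep Q.1]
      rw [Projectivization.mk_eq_mk_iff]
      exact ⟨Units.mk0 (c Q) (hc0 Q), rfl⟩
    have h3 : Projectivization.mk K (c P • (P.1).rep) hvne =
        Projectivization.mk K (c Q • (Q.1).rep) hwne := by
      rw [Projectivization.mk_eq_mk_iff]
      exact ⟨1, by rw [one_smul, hv]⟩
    have : P.1 = Q.1 := by rw [← h1, h3, h2]
    exact Subtype.ext this
  have hfin : Finite ↥S := Finite.of_injective F hFinj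
  have hSfin : S.Finite := Set.finite_coe_iff.mp hfin
  refine ⟨hSfin, ?_⟩
  -- counting
  have hcount : S.ncard ≤ (m ^ d) ^ (n+1) := by
    have h2 : Nat.card (Fin (n+1) → ιd → Fin m) = (m ^ d) ^ (n+1) := by
      rw [Nat.card_eq_fintype_card, Fintype.card_fun, Fintype.card_fun, Fintype.card_fin,
        Fintype.card_fin, hcard]
    rw [← Nat.card_coe_set_eq]
    exact le_trans (Nat.card_le_card_of_injective F hFinj) (le_of_eq h2)
  have hmR : (m:ℝ) ≤ (2*CA+1) * T := by
    have h1 : (m:ℝ) = 2*(N:ℝ)+1 := by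
      rw [hmdef]
      have : ((2*N+1).toNat : ℤ) = 2*N+1 := Int.toNat_of_nonneg (by omega)
      exact_mod_cast congrArg (fun z : ℤ => (z:ℝ)) this
    have h2 : (N:ℝ) ≤ CA * T := Int.floor_le _
    rw [h1]
    nlinarith [hT1, hCA]
  have hTd : T ^ d = CD ^ d * B := by
    rw [hT, mul_pow, ← Real.rpow_natCast (B ^ ((d:ℝ)⁻¹)) d, ← Real.rpow_mul hB0,
      inv_mul_cancel₀ (ne_of_gt hdR), Real.rpow_one]
  calc (S.ncard : ℝ) ≤ ((m:ℝ) ^ d) ^ (n+1) := by exact_mod_cast hcount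
    _ ≤ (((2*CA+1) * T) ^ d) ^ (n+1) := by
        refine pow_le_pow_left₀ (by positivity) ?_ _
        exact pow_le_pow_left₀ (Nat.cast_nonneg _) hmR _
    _ = ((((2*CA+1))^d * (CD ^ d * B))) ^ (n+1) := by rw [mul_pow, hTd]
    _ = (((2*CA+1)*CD)^d)^(n+1) * B ^ (n+1) := by
        rw [mul_pow (2*CA+1) CD d, ← mul_assoc, mul_pow]
end
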